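/- arXiv:1608.03027 — 3 statements merged into one kernel-verified Lean document; each statement's English description precedes it below -/
import Mathlib

section
/- Let m ≥ 5 be odd, h = (m-1)/2, n = q^m - 1. The number of integers a with 1 ≤ a ≤ q^{h+2}, q ∤ a, such that a is not the coset leader of its q-cyclotomic coset modulo n, equals q(q-1)^2. -/
/-!
Multiplication by `q ^ j` modulo `n = q ^ m - 1` cyclically rotates the `m` base-`q` digits of
`a`. When `a < q ^ (h + 2)` and `q ∤ a`, rotating by `j < h` only multiplies `a` by `q ^ j`, and
rotating by `j > h + 1` moves a nonzero digit to position `j ≥ h + 2`; so only the rotations by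
`h` and `h + 1` can decrease `a`. Writing `a = (x q + w) q ^ h + s` with digits `x, w < q` and
`s < q ^ h`, the rotation by `h` decreases `a` iff `w = 0` and `s ≤ x q`, and the rotation by
`h + 1` iff `s q < x q + w`. For fixed `x` this leaves `x (q - 1)` admissible `s` when `w = 0`
and `x` admissible `s` for each `w ≠ 0`; summing over `x` and `w` gives `q (q - 1) ^ 2`.
-/

/-- The q-cyclotomic coset of a modulo n: {a * q^j mod n : j ≥ 0}. -/
def cyclCoset (q n a : ℕ) : Finset ℕ :=
  (Finset.range n).image (fun j => a * q ^ j % n)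

/-- a is the coset leader (smallest element) of its q-cyclotomic coset modulo n. -/
def IsCosetLeader (q n a : ℕ) : Prop :=
  ∀ j : ℕ, a ≤ a * q ^ j % n

open Finset

lemma card_filter_range_mul (A B : ℕ) (p : ℕ → Prop) [DecidablePred p] :
    #{a ∈ range (A * B) | p a} = ∑ x ∈ range A, #{r ∈ range B | p (x * B + r)} := by
  induction A with
  | zero => simp
  | succ A ih =>
    rw [add_mul, one_mul, range_add, filter_union, card_union_of_disjoint, ih, sum_range_succ,
      filter_map, card_map]
    · rfl
    · refine disjoint_filter_filter ?_
      simp only [disjoint_left, mem_range, mem_map, addLeftEmbedding_apply, not_exists, not_and]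
      omega

lemma card_filter_not_dvd_le {q N M : ℕ} (hM : M < N) :
    #{s ∈ range N | ¬ q ∣ s ∧ s ≤ M} = M - M / q := by
  have : {s ∈ range N | ¬ q ∣ s ∧ s ≤ M} = {s ∈ Ioc 0 M | ¬ q ∣ s} := by
    ext s
    simp only [mem_filter, mem_range, mem_Ioc]
    constructor
    · rintro ⟨-, hs, hsM⟩
      exact ⟨⟨Nat.pos_of_ne_zero (by rintro rfl; exact hs (dvd_zero q)), hsM⟩, hs⟩
    · rintro ⟨⟨-, hsM⟩, hs⟩
      exact ⟨by omega, hs, hsM⟩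
  rw [this, filter_not, card_sdiff_of_subset (filter_subset _ _), Nat.Ioc_filter_dvd_card_eq_div,
    Nat.card_Ioc, Nat.sub_zero]

section Rotation

variable {q n m : ℕ}

lemma mul_pow_mod_eq_mul_pow_mod_mod (hn : q ^ m = n + 1) (a j : ℕ) :
    a * q ^ j % n = a * q ^ (j % m) % n := by
  have h1 : q ^ m ≡ 1 [MOD n] := by rw [hn]; exact Nat.add_modEq_left
  have h : q ^ j ≡ q ^ (j % m) [MOD n] := by
    conv_lhs => rw [← Nat.div_add_mod j m, pow_add, pow_mul]
    simpa using (h1.pow (j / m)).mul_right (q ^ (j % m))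
  exact h.mul_left a

lemma isCosetLeader_iff_forall_lt (hn : q ^ m = n + 1) (hm : 0 < m) {a : ℕ} :
    IsCosetLeader q n a ↔ ∀ j < m, a ≤ a * q ^ j % n :=
  ⟨fun h j _ => h j,
    fun h j => (mul_pow_mod_eq_mul_pow_mod_mod hn a j).symm ▸ h _ (Nat.mod_lt j hm)⟩

lemma mul_pow_mod_eq_rotate (hn : q ^ m = n + 1) {a j : ℕ} (hj : j ≤ m) (ha0 : 0 < a)
    (ha : a < n) :
    a * q ^ j % n = a / q ^ (m - j) + a % q ^ (m - j) * q ^ j := by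
  have hsplit : q ^ (m - j) * q ^ j = n + 1 := by rw [← pow_add, Nat.sub_add_cancel hj, hn]
  have hpos : 0 < q ^ (m - j) * q ^ j := by omega
  set t := a / q ^ (m - j)
  set r := a % q ^ (m - j)
  have hmod : a * q ^ j = (t + r * q ^ j) + t * n := by
    calc a * q ^ j = (t * q ^ (m - j) + r) * q ^ j := by rw [Nat.div_add_mod']
      _ = t * (q ^ (m - j) * q ^ j) + r * q ^ j := by ring
      _ = _ := by rw [hsplit]; ring
  have ht : t < q ^ j := by
    rw [Nat.div_lt_iff_lt_mul (Nat.pos_of_mul_pos_right hpos), mul_comm, hsplit]; omega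
  have hr : r < q ^ (m - j) := Nat.mod_lt _ (Nat.pos_of_mul_pos_right hpos)
  have hle : t + r * q ^ j ≤ n := by nlinarith
  -- `q` is a unit modulo `n`, so `a * q ^ j` is not divisible by `n` as `0 < a < n`
  have hne : t + r * q ^ j ≠ n := by
    intro heq
    have hdvd : n ∣ a * q ^ j := ⟨t + 1, by rw [hmod, heq]; ring⟩
    have hcop : n.Coprime (q ^ j) := Nat.Coprime.symm <|
      (Nat.Coprime.coprime_dvd_left (pow_dvd_pow q hj)) (by rw [hn]; simp)
    have := Nat.le_of_dvd ha0 (hcop.dvd_of_dvd_mul_right hdvd)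
    omega
  rw [hmod, Nat.add_mul_mod_self_right, Nat.mod_eq_of_lt (lt_of_le_of_ne hle hne)]

end Rotation

lemma isCosetLeader_iff_of_lt_pow {q n h a : ℕ} (hq : 2 ≤ q) (hh : 2 ≤ h)
    (hn : q ^ (2 * h + 1) = n + 1) (ha0 : 0 < a) (ha : a < q ^ (h + 2)) (hqa : ¬ q ∣ a) :
    IsCosetLeader q n a ↔
      a ≤ a / q ^ (h + 1) + a % q ^ (h + 1) * q ^ h ∧
      a ≤ a / q ^ h + a % q ^ h * q ^ (h + 1) := by
  have han : a < n := by
    have : q ^ (h + 2) < q ^ (2 * h + 1) := Nat.pow_lt_pow_right hq (by omega)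
    omega
  have hrot := fun j (hj : j ≤ 2 * h + 1) => mul_pow_mod_eq_rotate hn hj ha0 han
  rw [isCosetLeader_iff_forall_lt hn (by omega)]
  constructor
  · intro hlead
    have h1 := hrot h (by omega)
    have h2 := hrot (h + 1) (by omega)
    rw [show 2 * h + 1 - h = h + 1 by omega] at h1
    rw [show 2 * h + 1 - (h + 1) = h by omega] at h2
    exact ⟨h1 ▸ hlead h (by omega), h2 ▸ hlead (h + 1) (by omega)⟩
  · rintro ⟨h1, h2⟩ j hj
    rw [hrot j hj.le]
    rcases lt_or_ge j h with hjh | hjh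
    · have hlt : a < q ^ (2 * h + 1 - j) :=
        ha.trans_le (Nat.pow_le_pow_right (by omega) (by omega))
      rw [Nat.div_eq_of_lt hlt, Nat.mod_eq_of_lt hlt, zero_add]
      exact Nat.le_mul_of_pos_right a (by positivity)
    rcases lt_or_ge (h + 1) j with hjh' | hjh'
    · have hr : 0 < a % q ^ (2 * h + 1 - j) := Nat.pos_of_ne_zero fun h0 =>
        hqa ((dvd_pow_self q (by omega)).trans (Nat.dvd_of_mod_eq_zero h0))
      calc a ≤ q ^ j := ha.le.trans (Nat.pow_le_pow_right (by omega) hjh')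
        _ ≤ a % q ^ (2 * h + 1 - j) * q ^ j := Nat.le_mul_of_pos_left _ hr
        _ ≤ _ := Nat.le_add_left _ _
    obtain hj | hj : j = h ∨ j = h + 1 := by omega
    · rwa [hj, show 2 * h + 1 - h = h + 1 by omega]
    · rwa [hj, show 2 * h + 1 - (h + 1) = h by omega]

/- In the next two lemmas `Q` stands for `q ^ h` and `(x * q + w) * Q + s` for a number with
top digits `x, w` above a low part `s < Q`; the left-hand sides are its rotations by `h` and
by `h + 1`. -/
lemma rotate_lt_iff {q Q x w s : ℕ} (hQ : q * q ≤ Q) (hx : x < q) (hw : w < q)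
    (hs0 : 0 < s) (hs : s < Q) :
    x + (w * Q + s) * Q < (x * q + w) * Q + s ↔ w = 0 ∧ s ≤ x * q := by
  constructor
  · intro hlt
    have hw0 : w = 0 := by
      by_contra hw0
      have h1 : (x * q + w + 1) * Q ≤ Q * Q := Nat.mul_le_mul_right Q (by nlinarith)
      have h2 : Q * Q ≤ w * Q * Q := by nlinarith [Nat.one_le_iff_ne_zero.mpr hw0]
      nlinarith
    refine ⟨hw0, ?_⟩
    subst hw0
    by_contra hsx
    nlinarith
  · rintro ⟨rfl, hsx⟩
    have hx0 : 0 < x := by nlinarith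
    nlinarith

lemma rotate_succ_lt_iff {q Q A s : ℕ} (hA : A < q * q) (hQ : q * q ≤ Q) (hs0 : 0 < s) :
    A + s * (Q * q) < A * Q + s ↔ s * q < A := by
  constructor
  · intro hlt
    by_contra hsA
    have hq : 1 ≤ q := by nlinarith
    have hQ1 : 1 ≤ Q := by nlinarith
    nlinarith [Nat.mul_le_mul_right (Q - 1) (not_lt.mp hsA), Nat.le_mul_of_pos_right s hq]
  · intro hsA
    have hsq : s < q := by nlinarith
    nlinarith

lemma not_isCosetLeader_iff {q n h x w s : ℕ} (hq : 2 ≤ q) (hh : 2 ≤ h)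
    (hn : q ^ (2 * h + 1) = n + 1) (hx : x < q) (hw : w < q) (hs : s < q ^ h) (hqs : ¬ q ∣ s) :
    ¬ IsCosetLeader q n ((x * q + w) * q ^ h + s) ↔ (w = 0 ∧ s ≤ x * q) ∨ s * q < x * q + w := by
  have hs0 : 0 < s := Nat.pos_of_ne_zero (by rintro rfl; exact hqs (dvd_zero q))
  have hQ : q * q ≤ q ^ h := by
    rw [← sq]; exact Nat.pow_le_pow_right (by omega) hh
  have hA : x * q + w < q * q := by nlinarith
  have hwQ : w * q ^ h + s < q ^ h * q := by nlinarith
  have ha : (x * q + w) * q ^ h + s < q ^ (h + 2) := by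
    rw [pow_add, sq]; nlinarith
  have hqa : ¬ q ∣ (x * q + w) * q ^ h + s := fun hd =>
    hqs ((Nat.dvd_add_right (dvd_mul_of_dvd_right (dvd_pow_self q (by omega)) _)).mp hd)
  have hdiv : ((x * q + w) * q ^ h + s) / q ^ (h + 1) = x := by
    rw [show (x * q + w) * q ^ h + s = (w * q ^ h + s) + q ^ (h + 1) * x by ring,
      Nat.add_mul_div_left _ _ (by positivity), Nat.div_eq_of_lt (pow_succ q h ▸ hwQ), zero_add]
  have hmod : ((x * q + w) * q ^ h + s) % q ^ (h + 1) = w * q ^ h + s := by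
    rw [show (x * q + w) * q ^ h + s = (w * q ^ h + s) + q ^ (h + 1) * x by ring,
      Nat.add_mul_mod_self_left, Nat.mod_eq_of_lt (pow_succ q h ▸ hwQ)]
  have hdiv' : ((x * q + w) * q ^ h + s) / q ^ h = x * q + w := by
    rw [add_comm, mul_comm, Nat.add_mul_div_left _ _ (by positivity), Nat.div_eq_of_lt hs,
      zero_add]
  have hmod' : ((x * q + w) * q ^ h + s) % q ^ h = s := by
    rw [add_comm, mul_comm, Nat.add_mul_mod_self_left, Nat.mod_eq_of_lt hs]
  rw [isCosetLeader_iff_of_lt_pow hq hh hn (by positivity) ha hqa, hdiv, hmod, hdiv', hmod',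
    not_and_or, not_le, not_le, rotate_lt_iff hQ hx hw hs0 hs, pow_succ,
    rotate_succ_lt_iff hA hQ hs0]

open Classical in
lemma card_nonLeaders_of_digits {q n h x w : ℕ} (hq : 2 ≤ q) (hh : 2 ≤ h)
    (hn : q ^ (2 * h + 1) = n + 1) (hx : x < q) (hw : w < q) :
    #{s ∈ range (q ^ h) | ¬ q ∣ (x * q + w) * q ^ h + s ∧
      ¬ IsCosetLeader q n ((x * q + w) * q ^ h + s)} = if w = 0 then x * q - x else x := by
  have hQ : q * q ≤ q ^ h := by
    rw [← sq]; exact Nat.pow_le_pow_right (by omega) hh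
  have hdvd : ∀ s, q ∣ (x * q + w) * q ^ h + s ↔ q ∣ s := fun s =>
    Nat.dvd_add_right (dvd_mul_of_dvd_right (dvd_pow_self q (by omega)) _)
  set M := if w = 0 then x * q else x
  have hMQ : M < q ^ h := by simp only [M]; split_ifs <;> nlinarith
  calc _ = #{s ∈ range (q ^ h) | ¬ q ∣ s ∧ s ≤ M} := by
        refine congrArg card (filter_congr fun s hs => ?_)
        rw [hdvd]
        refine and_congr_right fun hqs => ?_
        rw [not_isCosetLeader_iff hq hh hn hx hw (mem_range.mp hs) hqs]
        simp only [M]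
        split_ifs with hw0
        · subst hw0
          exact ⟨fun h => h.elim And.right fun h => by nlinarith, fun h => Or.inl ⟨rfl, h⟩⟩
        · simp only [hw0, false_and, false_or]
          have := Nat.pos_of_ne_zero hw0
          exact ⟨fun h => by nlinarith, fun h => by nlinarith [Nat.mul_le_mul_right q h]⟩
    _ = M - M / q := card_filter_not_dvd_le hMQ
    _ = _ := by
        simp only [M]
        split_ifs
        · rw [Nat.mul_div_cancel _ (by omega)]
        · rw [Nat.div_eq_of_lt hx, Nat.sub_zero]

open Classical in
lemma card_nonLeaders {q n h : ℕ} (hq : 2 ≤ q) (hh : 2 ≤ h) (hn : q ^ (2 * h + 1) = n + 1) :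
    #{a ∈ range (q ^ (h + 2)) | ¬ q ∣ a ∧ ¬ IsCosetLeader q n a} = q * (q - 1) ^ 2 := by
  have hsplit : ∀ x w s, x * (q * q ^ h) + (w * q ^ h + s) = (x * q + w) * q ^ h + s :=
    fun _ _ _ => by ring
  have hrow : ∀ x ∈ range q,
      ∑ w ∈ range q, (if w = 0 then x * q - x else x) = 2 * (q - 1) * x := by
    intro x _
    obtain ⟨p, rfl⟩ : ∃ p, q = p + 1 := ⟨q - 1, by omega⟩
    rw [sum_range_succ']
    simp only [Nat.succ_ne_zero, if_false, if_true, sum_const, card_range, smul_eq_mul]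
    rw [Nat.add_sub_cancel, mul_add, mul_one, Nat.add_sub_cancel]
    ring
  rw [show q ^ (h + 2) = q * (q * q ^ h) by ring, card_filter_range_mul]
  simp only [card_filter_range_mul, hsplit]
  rw [sum_congr rfl fun x hx => sum_congr rfl fun w hw =>
      card_nonLeaders_of_digits hq hh hn (mem_range.mp hx) (mem_range.mp hw),
    sum_congr rfl hrow, ← mul_sum]
  calc 2 * (q - 1) * ∑ x ∈ range q, x = (q - 1) * ((∑ x ∈ range q, x) * 2) := by ring
    _ = q * (q - 1) ^ 2 := by rw [sum_range_id_mul_two]; ring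

theorem stmt_7 (q m : ℕ) (hq : IsPrimePow q) (hm : Odd m) (hm5 : 5 ≤ m) :
    {a : ℕ | 1 ≤ a ∧ a ≤ q ^ ((m - 1) / 2 + 2) ∧ ¬ q ∣ a ∧
      ¬ IsCosetLeader q (q ^ m - 1) a}.ncard = q * (q - 1) ^ 2 := by
  classical
  obtain ⟨h, rfl⟩ := hm
  have hq2 : 2 ≤ q := hq.two_le
  have hn : q ^ (2 * h + 1) = (q ^ (2 * h + 1) - 1) + 1 :=
    (Nat.sub_add_cancel (Nat.one_le_pow _ _ (by omega))).symm
  rw [show (2 * h + 1 - 1) / 2 = h by omega, ← card_nonLeaders hq2 (by omega) hn,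
    ← Set.ncard_coe_finset]
  congr 1
  ext a
  simp only [Set.mem_ofPred_eq, coe_filter, mem_range]
  constructor
  · rintro ⟨-, ha, hqa, hlead⟩
    refine ⟨lt_of_le_of_ne ha fun heq => hqa ?_, hqa, hlead⟩
    exact heq ▸ dvd_pow_self q (by omega)
  · rintro ⟨ha, hqa, hlead⟩
    exact ⟨Nat.pos_of_ne_zero (by rintro rfl; exact hqa (dvd_zero q)), ha.le, hqa, hlead⟩
end

section
/- Let m ≥ 4 be even, h = m/2, n = q^m - 1. For every integer a with q^h ≤ a ≤ q^{h+1}, the q-cyclotomic coset C_a modulo n has cardinality m/2 if a = c(q^h + 1) for some 1 ≤ c ≤ q - 1, and cardinality m otherwise. -/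
/-!
The coset `C_a` has as many elements as the period `l` of `a` under `x ↦ x q mod n`, and `l ∣ m`
because `q^m ≡ 1`. If `l = d` is a proper divisor of `m = 2h`, then `d ≤ h` and the cofactor
`S = (q^m - 1)/(q^d - 1)` divides `a`. For `d < h` this cofactor exceeds `q^(h+1) ≥ a`, so `d = h`
and `S = q^h + 1` divides `a`; the bounds on `a` then force `a = c (q^h + 1)` with `1 ≤ c ≤ q - 1`.
-/

open Function

noncomputable def mulModPeriod (q n a : ℕ) : ℕ :=
  minimalPeriod (fun x => x * q % n) (a % n)

lemma iterate_mul_mod (q n a j : ℕ) :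
    (fun x => x * q % n)^[j] (a % n) = a * q ^ j % n := by
  induction j with
  | zero => simp
  | succ j ih => rw [iterate_succ_apply', ih, Nat.mod_mul_mod, pow_succ, mul_assoc]

lemma isPeriodicPt_mul_mod_iff {q n a l : ℕ} :
    IsPeriodicPt (fun x => x * q % n) l (a % n) ↔ a * q ^ l ≡ a [MOD n] := by
  rw [IsPeriodicPt, IsFixedPt, iterate_mul_mod]
  rfl

lemma mulModPeriod_dvd_iff {q n a l : ℕ} : mulModPeriod q n a ∣ l ↔ a * q ^ l ≡ a [MOD n] := by
  rw [mulModPeriod, ← isPeriodicPt_iff_minimalPeriod_dvd, isPeriodicPt_mul_mod_iff]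

lemma card_cyclCoset_eq_mulModPeriod {q n : ℕ} (hn : 0 < n) (hq : q.Coprime n) (a : ℕ) :
    (cyclCoset q n a).card = mulModPeriod q n a := by
  set f : ℕ → ℕ := fun x => x * q % n
  have hφ : IsPeriodicPt f (Nat.totient n) (a % n) :=
    isPeriodicPt_mul_mod_iff.2 <| by simpa using (Nat.ModEq.pow_totient hq).mul_left a
  have hpos : 0 < minimalPeriod f (a % n) := hφ.minimalPeriod_pos (Nat.totient_pos.2 hn)
  have hle : minimalPeriod f (a % n) ≤ n := (hφ.minimalPeriod_le (Nat.totient_pos.2 hn)).trans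
    (Nat.totient_le n)
  have hcoset : cyclCoset q n a = (Finset.range (minimalPeriod f (a % n))).image (f^[·] (a % n)) := by
    ext x
    simp only [cyclCoset, Finset.mem_image, Finset.mem_range, ← iterate_mul_mod]
    constructor
    · rintro ⟨j, -, rfl⟩
      exact ⟨j % minimalPeriod f (a % n), Nat.mod_lt j hpos, iterate_mod_minimalPeriod_eq⟩
    · rintro ⟨j, hj, rfl⟩
      exact ⟨j, hj.trans_le hle, rfl⟩
  rw [hcoset, Finset.card_image_of_injOn, Finset.card_range, mulModPeriod]
  simpa using iterate_injOn_Iio_minimalPeriod (f := f) (x := a % n)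

lemma coprime_self_pow_sub_one {q k : ℕ} (hq : 0 < q) (hk : k ≠ 0) : q.Coprime (q ^ k - 1) :=
  ((Nat.coprime_self_sub_right (Nat.one_le_pow k q hq)).2 (Nat.coprime_one_right _)).coprime_dvd_left
    (dvd_pow_self q hk)

lemma le_of_dvd_two_mul_of_lt {d h : ℕ} (hd : d ∣ 2 * h) (hlt : d < 2 * h) : d ≤ h := by
  obtain ⟨k, hk⟩ := hd
  rcases k with _ | _ | k
  · omega
  · omega
  · nlinarith

lemma eq_and_dvd_of_mul_pow_modEq {q h d a : ℕ} (hq : 2 ≤ q) (hd : d ∣ 2 * h) (hlt : d < 2 * h)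
    (ha : 0 < a) (ha' : a ≤ q ^ (h + 1)) (hmod : a * q ^ d ≡ a [MOD q ^ (2 * h) - 1]) :
    d = h ∧ q ^ h + 1 ∣ a := by
  have hdh := le_of_dvd_two_mul_of_lt hd hlt
  have hqd : 1 < q ^ d := Nat.one_lt_pow (Nat.pos_of_dvd_of_pos hd (by omega)).ne' hq
  obtain ⟨S, hS⟩ := Nat.pow_sub_one_dvd_pow_sub_one q hd
  have hSa : S ∣ a := by
    have := (Nat.modEq_iff_dvd' (Nat.le_mul_of_pos_right a (by omega))).1 hmod.symm
    rw [hS, ← Nat.mul_sub_one, mul_comm a] at this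
    exact Nat.dvd_of_mul_dvd_mul_left (by omega) this
  obtain rfl : d = h := by
    by_contra hne
    have hSle : (q ^ d - 1) * S ≤ (q ^ d - 1) * q ^ (h + 1) :=
      Nat.mul_le_mul_left _ ((Nat.le_of_dvd ha hSa).trans ha')
    have hprod : (q ^ d - 1) * q ^ (h + 1) = q ^ (d + (h + 1)) - q ^ (h + 1) := by
      rw [Nat.sub_one_mul, ← pow_add]
    have hpow_le : q ^ (d + (h + 1)) ≤ q ^ (2 * h) := Nat.pow_le_pow_right (by omega) (by omega)
    have hone_lt : 1 < q ^ (h + 1) := Nat.one_lt_pow (by omega) hq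
    have hpow_mono : q ^ (h + 1) ≤ q ^ (d + (h + 1)) := Nat.pow_le_pow_right (by omega) (by omega)
    omega
  have hfac : q ^ (2 * d) - 1 = (q ^ d - 1) * (q ^ d + 1) := by
    rw [mul_comm 2, pow_mul, ← one_pow 2, Nat.sq_sub_sq, one_pow, mul_comm]
  exact ⟨rfl, Nat.eq_of_mul_eq_mul_left (by omega) (hS.symm.trans hfac) ▸ hSa⟩

lemma mul_pow_modEq_of_dvd {q h a : ℕ} (hq : 0 < q) (hdvd : q ^ h + 1 ∣ a) :
    a * q ^ h ≡ a [MOD q ^ (2 * h) - 1] := by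
  obtain ⟨c, rfl⟩ := hdvd
  refine (Nat.modEq_iff_dvd.2 ?_).symm
  push_cast [Nat.one_le_pow _ _ hq]
  exact ⟨c, by ring⟩

lemma exists_eq_mul_of_dvd {q h a : ℕ} (hq : 0 < q) (ha : q ^ h ≤ a) (ha' : a ≤ q ^ (h + 1))
    (hdvd : q ^ h + 1 ∣ a) : ∃ c : ℕ, 1 ≤ c ∧ c ≤ q - 1 ∧ a = c * (q ^ h + 1) := by
  obtain ⟨c, rfl⟩ := hdvd
  refine ⟨c, ?_, ?_, mul_comm _ _⟩
  · rcases c with _ | c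
    · have := Nat.one_le_pow h q hq
      omega
    · omega
  · by_contra hc
    have := Nat.mul_le_mul_left (q ^ h + 1) (show q ≤ c by omega)
    rw [pow_succ] at ha'
    nlinarith

theorem stmt_9_general (q m : ℕ) (hq : IsPrimePow q) (hm : Even m) (a : ℕ)
    (ha1 : q ^ (m / 2) ≤ a) (ha2 : a ≤ q ^ (m / 2 + 1)) :
    ((∃ c : ℕ, 1 ≤ c ∧ c ≤ q - 1 ∧ a = c * (q ^ (m / 2) + 1)) →
      (cyclCoset q (q ^ m - 1) a).card = m / 2) ∧
    ((¬ ∃ c : ℕ, 1 ≤ c ∧ c ≤ q - 1 ∧ a = c * (q ^ (m / 2) + 1)) →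
      (cyclCoset q (q ^ m - 1) a).card = m) := by
  obtain ⟨h, rfl⟩ := hm.two_dvd
  rw [Nat.mul_div_cancel_left h two_pos] at *
  obtain rfl | hh := h.eq_zero_or_pos
  · simp [cyclCoset]
  have hq2 := hq.two_le
  have hN : 1 < q ^ (2 * h) := Nat.one_lt_pow (by omega) hq2
  rw [card_cyclCoset_eq_mulModPeriod (by omega) (coprime_self_pow_sub_one (by omega) (by omega))]
  have hfull : mulModPeriod q (q ^ (2 * h) - 1) a ∣ 2 * h :=
    mulModPeriod_dvd_iff.2 <| by simpa using (Nat.modEq_sub hN.le).mul_left a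
  have hproper (hne : mulModPeriod q (q ^ (2 * h) - 1) a ≠ 2 * h) :=
    eq_and_dvd_of_mul_pow_modEq hq2 hfull ((Nat.le_of_dvd (by omega) hfull).lt_of_ne hne)
      ((Nat.one_le_pow h q (by omega)).trans ha1) ha2 (mulModPeriod_dvd_iff.1 dvd_rfl)
  constructor
  · rintro ⟨c, -, -, rfl⟩
    have hhalf : mulModPeriod q (q ^ (2 * h) - 1) (c * (q ^ h + 1)) ∣ h :=
      mulModPeriod_dvd_iff.2 (mul_pow_modEq_of_dvd (by omega) (dvd_mul_left _ c))
    refine (hproper fun hfull_eq => ?_).1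
    have := Nat.le_of_dvd hh (hfull_eq ▸ hhalf)
    omega
  · intro hnot
    by_contra hne
    exact hnot (exists_eq_mul_of_dvd (by omega) ha1 ha2 (hproper hne).2)

theorem stmt_9 (q m : ℕ) (hq : IsPrimePow q) (hm : Even m) (hm4 : 4 ≤ m) (a : ℕ)
    (ha1 : q ^ (m / 2) ≤ a) (ha2 : a ≤ q ^ (m / 2 + 1)) :
    ((∃ c : ℕ, 1 ≤ c ∧ c ≤ q - 1 ∧ a = c * (q ^ (m / 2) + 1)) →
      (cyclCoset q (q ^ m - 1) a).card = m / 2) ∧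
    ((¬ ∃ c : ℕ, 1 ≤ c ∧ c ≤ q - 1 ∧ a = c * (q ^ (m / 2) + 1)) →
      (cyclCoset q (q ^ m - 1) a).card = m) :=
  stmt_9_general q m hq hm a ha1 ha2
end

section
/- Let m ≥ 3 be odd, and let q ≥ 3 be a prime power, n = (q^m - 1)/(q - 1). The smallest positive integer a with q ∤ a that is not the coset leader of its q-cyclotomic coset modulo n is a = (q^{(m+1)/2} - 1)/(q - 1) + 1. -/
/-
Multiplying by `q - 1` turns the coset of `a` modulo `n` into the coset of `b = (q - 1) a`
modulo `q ^ m - 1`, on which multiplication by `q` cyclically rotates the `m` base-`q` digits.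
With `t = (m + 1) / 2`, a smaller admissible `a` gives `b < q ^ t` with nonzero last digit: a
rotation either shifts all digits of `b` upward, or carries that last digit to a position
`≥ t`, so it never makes `b` smaller. For the bound itself, `b = q ^ t + (q - 2)`, and the
rotation by `t - 1` places gives `1 + (q - 2) q ^ (t - 1) < b`.
-/

lemma sub_one_mul_div_pow_sub_one (q t : ℕ) : (q - 1) * ((q ^ t - 1) / (q - 1)) = q ^ t - 1 :=
  Nat.mul_div_cancel' (by simpa only [one_pow] using Nat.sub_dvd_pow_sub_pow q 1 t)

/-- The `m` base-`q` digits of `b` rotated upward by `r ≤ m` places. -/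
def digitRotate (q m r b : ℕ) : ℕ :=
  b / q ^ (m - r) + b % q ^ (m - r) * q ^ r

section

variable {q m : ℕ}

lemma pow_modEq_pow_mod (hq : 0 < q) (j : ℕ) : q ^ j ≡ q ^ (j % m) [MOD q ^ m - 1] := by
  have h : q ^ m ≡ 1 [MOD q ^ m - 1] := Nat.modEq_sub (Nat.one_le_pow _ _ hq)
  calc q ^ j = (q ^ m) ^ (j / m) * q ^ (j % m) := by rw [← pow_mul, ← pow_add, Nat.div_add_mod]
    _ ≡ 1 ^ (j / m) * q ^ (j % m) [MOD q ^ m - 1] := (h.pow _).mul_right _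
    _ = q ^ (j % m) := by rw [one_pow, one_mul]

lemma mul_pow_modEq_digitRotate (b : ℕ) {r : ℕ} (hq : 0 < q) (hr : r ≤ m) :
    b * q ^ r ≡ digitRotate q m r b [MOD q ^ m - 1] := by
  have h : q ^ m ≡ 1 [MOD q ^ m - 1] := Nat.modEq_sub (Nat.one_le_pow _ _ hq)
  have hsplit : q ^ (m - r) * q ^ r = q ^ m := by rw [← pow_add, Nat.sub_add_cancel hr]
  calc b * q ^ r = b / q ^ (m - r) * q ^ m + b % q ^ (m - r) * q ^ r := by
        conv_lhs => rw [← Nat.div_add_mod b (q ^ (m - r))]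
        rw [← hsplit]; ring
    _ ≡ b / q ^ (m - r) * 1 + b % q ^ (m - r) * q ^ r [MOD q ^ m - 1] :=
        (h.mul_left _).add_right _
    _ = b / q ^ (m - r) + b % q ^ (m - r) * q ^ r := by rw [mul_one]

lemma add_mul_lt_of_mul_add_lt {Q R u v : ℕ} (hu : u < R) (hv : v < Q)
    (h : Q * u + v < Q * R - 1) : u + v * R < Q * R - 1 := by
  rcases Nat.lt_or_ge (v + 1) Q with hv' | hv'
  · have : (v + 2) * R ≤ Q * R := Nat.mul_le_mul_right R hv'
    rw [Nat.add_mul] at this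
    omega
  · obtain rfl : Q = v + 1 := by omega
    have : (v + 1) * (u + 1) < (v + 1) * R := by rw [Nat.mul_add]; omega
    have := Nat.lt_of_mul_lt_mul_left this
    rw [Nat.add_mul] at h ⊢
    omega

lemma digitRotate_lt {b r : ℕ} (hq : 0 < q) (hb : b < q ^ m - 1) (hr : r ≤ m) :
    digitRotate q m r b < q ^ m - 1 := by
  unfold digitRotate
  have hQ : 0 < q ^ (m - r) := by positivity
  rw [← Nat.sub_add_cancel hr, pow_add] at hb ⊢
  rw [Nat.sub_add_cancel hr]
  refine add_mul_lt_of_mul_add_lt ?_ (Nat.mod_lt b hQ) (by rwa [Nat.div_add_mod])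
  rw [Nat.div_lt_iff_lt_mul hQ, mul_comm]
  omega

lemma mul_pow_mod_eq_digitRotate {b r : ℕ} (hq : 0 < q) (hb : b < q ^ m - 1) (hr : r ≤ m) :
    b * q ^ r % (q ^ m - 1) = digitRotate q m r b :=
  Eq.trans (mul_pow_modEq_digitRotate b hq hr) (Nat.mod_eq_of_lt (digitRotate_lt hq hb hr))

lemma le_digitRotate {b t r : ℕ} (hq : 0 < q) (hbq : ¬ q ∣ b) (hbt : b < q ^ t)
    (htm : 2 * t ≤ m + 1) (hr : r < m) :
    b ≤ digitRotate q m r b := by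
  unfold digitRotate
  rcases Nat.lt_or_ge (m - r) t with hmr | hmr
  · have hv : b % q ^ (m - r) ≠ 0 := fun h =>
      hbq ((dvd_pow_self q (by omega)).trans (Nat.dvd_of_mod_eq_zero h))
    calc b ≤ q ^ t := hbt.le
      _ ≤ q ^ r := Nat.pow_le_pow_right hq (by omega)
      _ ≤ b % q ^ (m - r) * q ^ r := Nat.le_mul_of_pos_left _ (Nat.pos_of_ne_zero hv)
      _ ≤ _ := Nat.le_add_left _ _
  · have hb : b < q ^ (m - r) := hbt.trans_le (Nat.pow_le_pow_right hq hmr)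
    rw [Nat.div_eq_of_lt hb, Nat.mod_eq_of_lt hb, zero_add]
    exact Nat.le_mul_of_pos_right b (by positivity)

lemma isCosetLeader_iff_sub_one_mul_le (a : ℕ) (hq : 1 < q) (hm : 0 < m) :
    IsCosetLeader q ((q ^ m - 1) / (q - 1)) a ↔
      ∀ r < m, (q - 1) * a ≤ (q - 1) * a * q ^ r % (q ^ m - 1) := by
  have hscale (j : ℕ) : (q - 1) * (a * q ^ j % ((q ^ m - 1) / (q - 1))) =
      (q - 1) * a * q ^ j % (q ^ m - 1) := by
    rw [← Nat.mul_mod_mul_left, sub_one_mul_div_pow_sub_one, mul_assoc]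
  have hperiod (j : ℕ) : (q - 1) * a * q ^ j % (q ^ m - 1) =
      (q - 1) * a * q ^ (j % m) % (q ^ m - 1) :=
    Nat.ModEq.mul_left _ (pow_modEq_pow_mod (by omega) j)
  have hle (j : ℕ) : a ≤ a * q ^ j % ((q ^ m - 1) / (q - 1)) ↔
      (q - 1) * a ≤ (q - 1) * a * q ^ j % (q ^ m - 1) := by
    rw [← hscale, Nat.mul_le_mul_left_iff (by omega)]
  refine ⟨fun h r _ => (hle r).1 (h r), fun h j => (hle j).2 ?_⟩
  rw [hperiod]
  exact h _ (Nat.mod_lt j hm)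

lemma isCosetLeader_of_sub_one_mul_lt {a t : ℕ} (hq : 1 < q) (haq : ¬ q ∣ a)
    (hat : (q - 1) * a < q ^ t) (htm : 2 * t ≤ m + 1) (ht : t < m) :
    IsCosetLeader q ((q ^ m - 1) / (q - 1)) a := by
  have hbq : ¬ q ∣ (q - 1) * a := fun h =>
    haq (((Nat.coprime_self_sub_right hq.le).2 (Nat.coprime_one_right q)).dvd_of_dvd_mul_left h)
  have hbm : (q - 1) * a < q ^ m - 1 := by
    have := Nat.pow_lt_pow_right hq ht
    omega
  refine (isCosetLeader_iff_sub_one_mul_le a hq (by omega)).2 fun r hr => ?_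
  rw [mul_pow_mod_eq_digitRotate (by omega) hbm hr.le]
  exact le_digitRotate (by omega) hbq hat htm hr

lemma sub_one_mul_div_pow_sub_one_add_one (t : ℕ) (hq : 1 < q) :
    (q - 1) * ((q ^ t - 1) / (q - 1) + 1) = q ^ t + (q - 2) := by
  have := Nat.one_le_pow t q (by omega)
  rw [Nat.mul_add, sub_one_mul_div_pow_sub_one]
  omega

lemma not_dvd_div_pow_sub_one_add_one (t : ℕ) (hq : 3 ≤ q) (ht : 0 < t) :
    ¬ q ∣ (q ^ t - 1) / (q - 1) + 1 := by
  intro h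
  have h2 := h.mul_left (q - 1)
  rw [sub_one_mul_div_pow_sub_one_add_one t (by omega),
    Nat.dvd_add_right (dvd_pow_self q ht.ne')] at h2
  have := Nat.le_of_dvd (by omega) h2
  omega

lemma not_isCosetLeader_div_pow_sub_one_add_one {t : ℕ} (hq : 1 < q) (ht : 2 ≤ t)
    (hm : m + 1 = 2 * t) :
    ¬ IsCosetLeader q ((q ^ m - 1) / (q - 1)) ((q ^ t - 1) / (q - 1) + 1) := by
  rw [isCosetLeader_iff_sub_one_mul_le _ hq (by omega), sub_one_mul_div_pow_sub_one_add_one t hq]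
  intro h
  have hqt : q ≤ q ^ t := Nat.le_self_pow (by omega) q
  have hbm : q ^ t + (q - 2) < q ^ m - 1 := by
    have : q ^ (t + 1) ≤ q ^ m := Nat.pow_le_pow_right (by omega) (by omega)
    rw [pow_succ] at this
    have : q ^ t * 2 ≤ q ^ t * q := Nat.mul_le_mul_left _ hq
    omega
  have hrot := h (t - 1) (by omega)
  have hq2 : q - 2 < q ^ t := by omega
  rw [mul_pow_mod_eq_digitRotate (by omega) hbm (by omega), digitRotate,
    show m - (t - 1) = t by omega, Nat.add_div_left _ (by positivity), Nat.add_mod_left,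
    Nat.div_eq_of_lt hq2, Nat.mod_eq_of_lt hq2] at hrot
  have : (q - 2) * q ^ (t - 1) + q ^ (t - 1) < q ^ t :=
    calc (q - 2) * q ^ (t - 1) + q ^ (t - 1) = (q - 1) * q ^ (t - 1) := by
          rw [← Nat.succ_mul]; congr 1; omega
      _ < q * q ^ (t - 1) := Nat.mul_lt_mul_of_pos_right (by omega) (by positivity)
      _ = q ^ t := by rw [← pow_succ', Nat.sub_add_cancel (by omega)]
  have := Nat.one_le_pow (t - 1) q (by omega)
  omega

end

theorem stmt_15_general (q m : ℕ) (hq3 : 3 ≤ q) (hm : Odd m) (hm3 : 3 ≤ m) :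
    IsLeast {a : ℕ | 0 < a ∧ ¬ q ∣ a ∧ ¬ IsCosetLeader q ((q ^ m - 1) / (q - 1)) a}
      ((q ^ ((m + 1) / 2) - 1) / (q - 1) + 1) := by
  obtain ⟨k, rfl⟩ := hm
  have ht : (2 * k + 1 + 1) / 2 = k + 1 := by omega
  rw [ht]
  refine ⟨⟨Nat.succ_pos _, not_dvd_div_pow_sub_one_add_one _ hq3 k.succ_pos,
    not_isCosetLeader_div_pow_sub_one_add_one (by omega) (by omega) (by omega)⟩, ?_⟩
  rintro a ⟨-, haq, hnl⟩
  by_contra! hlt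
  refine hnl (isCosetLeader_of_sub_one_mul_lt (t := k + 1) (by omega) haq ?_ (by omega) (by omega))
  have := sub_one_mul_div_pow_sub_one q (k + 1)
  have := Nat.mul_le_mul_left (q - 1) (Nat.le_of_lt_succ hlt)
  have := Nat.one_le_pow (k + 1) q (by omega)
  omega

theorem stmt_15 (q m : ℕ) (hq : IsPrimePow q) (hq3 : 3 ≤ q) (hm : Odd m) (hm3 : 3 ≤ m) :
    IsLeast {a : ℕ | 0 < a ∧ ¬ q ∣ a ∧ ¬ IsCosetLeader q ((q ^ m - 1) / (q - 1)) a}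
      ((q ^ ((m + 1) / 2) - 1) / (q - 1) + 1) :=
  stmt_15_general q m hq3 hm hm3
end
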